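/- Let X be a finite simplicial complex of dimension n and let −1 ≤ k ≤ n−1. Then for every finitely generated abelian group A one has Rad_k(X, A) ≤ Rad_k(X, ℤ); in particular, if X admits a (k, ℤ)-cone function, then it admits a (k, A)-cone function Cone_X with Rad_k(Cone_X) ≤ Rad_k(X, ℤ). -/

import Mathlib

open scoped Classical

noncomputable section

universe u v

/-- A simplicial complex on a vertex type `V`, given by its set of faces
(finite sets of vertices), containing the empty set and closed under subsets. -/
structure SCplx (V : Type u) where
  faces : Set (Finset V)
  empty_mem : ∅ ∈ faces
  down_closed : ∀ s ∈ faces, ∀ t, t ⊆ s → t ∈ faces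

namespace SCplx

variable {V : Type u} {A : Type v}

/-- The vertex set of a simplicial complex. -/
def vertices (X : SCplx V) : Set V := {v | ({v} : Finset V) ∈ X.faces}

/-- `X.DimEq n` : the complex `X` is (exactly) `n`-dimensional. -/
def DimEq (X : SCplx V) (n : ℤ) : Prop :=
  (∀ s ∈ X.faces, (s.card : ℤ) ≤ n + 1) ∧ ∃ s ∈ X.faces, (s.card : ℤ) = n + 1

/-- `X` is pure `n`-dimensional: every face is contained in an `n`-dimensional face. -/
def Pure (X : SCplx V) (n : ℕ) : Prop :=
  ∀ s ∈ X.faces, ∃ t ∈ X.faces, s ⊆ t ∧ t.card = n + 1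

/-- An oriented `j`-simplex of `X`: a duplicate-free list of `j+1` vertices whose
underlying set is a face of `X`. -/
def Oriented (X : SCplx V) (j : ℤ) (l : List V) : Prop :=
  l.Nodup ∧ (l.length : ℤ) = j + 1 ∧ l.toFinset ∈ X.faces

/-- `f` represents a `j`-chain of `X` with coefficients in `A`: it is supported on
oriented `j`-simplices of `X`, antisymmetric, and finitely supported. -/
def IsChain (X : SCplx V) (A : Type v) [AddCommGroup A] (j : ℤ) (f : List V → A) : Prop :=
  (∀ l, ¬ X.Oriented j l → f l = 0) ∧
  (∀ (l₁ l₂ : List V) (a b : V), f (l₁ ++ a :: b :: l₂) = - f (l₁ ++ b :: a :: l₂)) ∧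
  {l : List V | f l ≠ 0}.Finite

/-- The simplicial boundary map. -/
def bdry [AddCommGroup A] (f : List V → A) : List V → A :=
  fun l => ∑ᶠ u : V, f (u :: l)

/-- The position of `x` in the list `σ`. -/
def pos (σ : List V) (x : V) : ℕ := σ.findIdx (fun y => decide (y = x))

/-- The sign of `l` as a rearrangement of `σ` (the parity of the number of inversions). -/
def relSign (σ l : List V) : ℤ :=
  (-1) ^ ((l.sublistsLen 2).countP fun s =>
    match s with
    | [a, b] => decide (pos σ b < pos σ a)
    | _ => false)

/-- The elementary chain `a·𝟙_σ`. -/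
def unitChain [AddCommGroup A] (σ : List V) (a : A) : List V → A := fun l =>
  if l.Perm σ then relSign σ l • a else 0

/-- The support of a chain: the set of (unoriented) faces on which it does not vanish. -/
def supp [AddCommGroup A] (f : List V → A) : Set (Finset V) :=
  {s | ∃ l : List V, l.Nodup ∧ l.toFinset = s ∧ f l ≠ 0}

/-- A `(k,A)`-cone function on `X` with apex `v`. -/
structure IsConeFun (X : SCplx V) (A : Type v) [AddCommGroup A] (k : ℤ) (v : V)
    (c : ℤ → (List V → A) → (List V → A)) : Prop where
  apex_mem : ({v} : Finset V) ∈ X.faces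
  map_unit_empty : ∀ a : A, c (-1) (unitChain [] a) = unitChain [v] a
  map_chain : ∀ j : ℤ, -1 ≤ j → j ≤ k → ∀ f, X.IsChain A j f → X.IsChain A (j + 1) (c j f)
  map_add : ∀ j : ℤ, -1 ≤ j → j ≤ k → ∀ f g, X.IsChain A j f → X.IsChain A j g →
    c j (f + g) = c j f + c j g
  cone_eq : ∀ j : ℤ, 0 ≤ j → j ≤ k → ∀ f, X.IsChain A j f →
    bdry (c j f) + c (j - 1) (bdry f) = f

/-- The `j`-th radius of a cone function. -/
def coneRad (X : SCplx V) [AddCommGroup A]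
    (c : ℤ → (List V → A) → (List V → A)) (j : ℤ) : ℕ :=
  sSup {m : ℕ | ∃ (σ : List V) (a : A),
    X.Oriented j σ ∧ (supp (c j (unitChain σ a))).ncard = m}

/-- The `(k, A)`-th cone radius of `X` (`⊤` if no `(k,A)`-cone function exists). -/
def complexRad (X : SCplx V) (A : Type v) [AddCommGroup A] (k : ℤ) : ℕ∞ :=
  sInf {R : ℕ∞ | ∃ (v : V) (c : ℤ → (List V → A) → (List V → A)),
    X.IsConeFun A k v c ∧ (X.coneRad c k : ℕ∞) = R}

/-- `X'` is a full subcomplex of `X`. -/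
def IsFullSub (X' X : SCplx V) : Prop :=
  X'.faces ⊆ X.faces ∧ ∀ s ∈ X.faces, (↑s : Set V) ⊆ X'.vertices → s ∈ X'.faces

/-- The full subcomplex of `X` spanned by a set `S` of vertices. -/
def spanned (X : SCplx V) (S : Set V) : SCplx V where
  faces := {s | s ∈ X.faces ∧ (↑s : Set V) ⊆ S}
  empty_mem := ⟨X.empty_mem, by simp⟩
  down_closed := by
    rintro s ⟨hs, hsub⟩ t ht
    exact ⟨X.down_closed s hs t ht, (Finset.coe_subset.mpr ht).trans hsub⟩

/-- The link of a vertex `w` in `X`. -/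
def link (X : SCplx V) (w : V) : SCplx V where
  faces := insert ∅ {s | w ∉ s ∧ insert w s ∈ X.faces}
  empty_mem := Set.mem_insert _ _
  down_closed := by
    intro s hs t ht
    simp only [Set.mem_insert_iff, Set.mem_setOf_eq] at hs ⊢
    rcases hs with rfl | ⟨hw, hins⟩
    · exact Or.inl (Finset.subset_empty.mp ht)
    · rcases eq_or_ne t ∅ with rfl | hne
      · exact Or.inl rfl
      · exact Or.inr ⟨fun hwt => hw (ht hwt),
          X.down_closed _ hins _ (Finset.insert_subset_insert _ ht)⟩

/-- The intersection of two simplicial complexes (on the same vertex type). -/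
def inter (X₁ X₂ : SCplx V) : SCplx V where
  faces := X₁.faces ∩ X₂.faces
  empty_mem := ⟨X₁.empty_mem, X₂.empty_mem⟩
  down_closed := fun s hs t ht =>
    ⟨X₁.down_closed s hs.1 t ht, X₂.down_closed s hs.2 t ht⟩

/-- The join of two simplicial complexes (on the same vertex type). -/
def join (Y₁ Y₂ : SCplx V) : SCplx V where
  faces := {s | ∃ s₁ ∈ Y₁.faces, ∃ s₂ ∈ Y₂.faces, s = s₁ ∪ s₂}
  empty_mem := ⟨∅, Y₁.empty_mem, ∅, Y₂.empty_mem, (Finset.union_empty ∅).symm⟩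
  down_closed := by
    rintro s ⟨s₁, h₁, s₂, h₂, rfl⟩ t ht
    refine ⟨t ∩ s₁, Y₁.down_closed _ h₁ _ Finset.inter_subset_right,
      t ∩ s₂, Y₂.down_closed _ h₂ _ Finset.inter_subset_right, ?_⟩
    rw [← Finset.inter_union_distrib_left]
    exact (Finset.inter_eq_left.mpr ht).symm

/-- The one-vertex complex `{∅, {v}}`. -/
def vertexCplx (v : V) : SCplx V where
  faces := {∅, {v}}
  empty_mem := Set.mem_insert _ _
  down_closed := by
    intro s hs t ht
    simp only [Set.mem_insert_iff, Set.mem_singleton_iff] at hs ⊢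
    rcases hs with rfl | rfl
    · exact Or.inl (Finset.subset_empty.mp ht)
    · rcases Finset.subset_singleton_iff.mp ht with h | h
      · exact Or.inl h
      · exact Or.inr h

/-- The graph (`1`-skeleton) of a simplicial complex, as a simple graph. -/
def graphOf (X : SCplx V) : SimpleGraph V where
  Adj a b := a ≠ b ∧ ({a, b} : Finset V) ∈ X.faces
  symm := ⟨by
    rintro a b ⟨hne, hm⟩
    exact ⟨hne.symm, by rwa [Finset.pair_comm] at hm⟩⟩
  loopless := ⟨by rintro a ⟨hne, -⟩; exact hne rfl⟩

/-- The normalized weight of a face `τ` in a pure `n`-dimensional complex. -/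
def weight (X : SCplx V) (n : ℕ) (τ : Finset V) : ℝ :=
  ({σ : Finset V | σ ∈ X.faces ∧ σ.card = n + 1 ∧ τ ⊆ σ}.ncard : ℝ) /
    (((n + 1).choose τ.card : ℝ) * ({σ : Finset V | σ ∈ X.faces ∧ σ.card = n + 1}.ncard : ℝ))

/-- The weighted norm of a cochain. -/
def cnorm (X : SCplx V) [AddCommGroup A] (n : ℕ) (f : List V → A) : ℝ :=
  ∑ᶠ τ ∈ supp f, X.weight n τ

/-- The simplicial coboundary map. -/
def cobdry [AddCommGroup A] (f : List V → A) : List V → A :=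
  fun l => ∑ i ∈ Finset.range l.length, ((-1 : ℤ) ^ i) • f (l.eraseIdx i)

/-- `f` is a `k`-coboundary. -/
def IsCobdry (X : SCplx V) (A : Type v) [AddCommGroup A] (k : ℤ) (f : List V → A) : Prop :=
  ∃ g : List V → A, X.IsChain A (k - 1) g ∧ f = cobdry g

/-- The distance from `f` to the space of `k`-coboundaries. -/
def distToCobdry (X : SCplx V) (A : Type v) [AddCommGroup A] (n : ℕ) (k : ℤ)
    (f : List V → A) : ℝ :=
  sInf {r : ℝ | ∃ g, X.IsCobdry A k g ∧ r = X.cnorm n (f - g)}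

/-- A simplicial automorphism of `X` (given by a map on the whole vertex type;
only its restriction to the vertices of `X` matters). -/
def IsAut (X : SCplx V) (g : V → V) : Prop :=
  Set.BijOn g X.vertices X.vertices ∧
  (∀ s ∈ X.faces, s.image g ∈ X.faces) ∧
  (∀ s ∈ X.faces, ∃ t ∈ X.faces, t.image g = s)

end SCplx

/-- The flag complex of a set `S` w.r.t. an incidence relation `I`. -/
def flagOf {α : Type u} (S : Set α) (I : α → α → Prop) : SCplx α where
  faces := {s : Finset α | (↑s : Set α) ⊆ S ∧ ∀ a ∈ s, ∀ b ∈ s, a ≠ b → I a b}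
  empty_mem := ⟨by simp, by simp⟩
  down_closed := by
    rintro s ⟨h1, h2⟩ t ht
    exact ⟨(Finset.coe_subset.mpr ht).trans h1,
      fun a ha b hb hab => h2 a (ht ha) b (ht hb) hab⟩

/-- The flag complex of a family of elements of a partial order (faces = finite chains). -/
def chainFlag {α : Type u} [PartialOrder α] (S : Set α) : SCplx α :=
  flagOf S (fun a b => a ≤ b ∨ b ≤ a)

/-- The quantity `S(n)` from the recursive radius bound. -/
def Sfun (R : ℕ → ℕ) (n : ℕ) : ℕ :=
  (Finset.range n).sup fun a => ((a + 1) * R a + 1) * R (n - 1 - a)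

section LinAlg

variable {K : Type u} {V : Type v} [DivisionRing K] [AddCommGroup V] [Module K V]

/-- Two subspaces of `V` are transversal. -/
def Transv (U W : Submodule K V) : Prop := U ⊓ W = ⊥ ∨ U ⊔ W = ⊤

/-- Two subspaces of `T` are transversal in `T`. -/
def TransvIn (T U W : Submodule K V) : Prop := U ⊓ W = ⊥ ∨ U ⊔ W = T

/-- The set `X_𝓔(V)` of proper nontrivial subspaces transversal to all members of `𝓔`. -/
def XE (E : Set (Submodule K V)) : Set (Submodule K V) :=
  {U | U ≠ ⊥ ∧ U ≠ ⊤ ∧ ∀ F ∈ E, Transv U F}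

end LinAlg

section Quadratic

variable {K : Type u} {V : Type v} [Field K] [AddCommGroup V] [Module K V]

/-- Nondegeneracy of the polar (associated bilinear) form of `Q`. -/
def QNondeg (Q : QuadraticForm K V) : Prop :=
  ∀ x : V, (∀ y : V, QuadraticMap.polar Q x y = 0) → x = 0

/-- A totally isotropic subspace. -/
def TotIso (Q : QuadraticForm K V) (U : Submodule K V) : Prop := ∀ x ∈ U, Q x = 0

/-- The orthogonal complement of a subspace w.r.t. the polar form of `Q`. -/
def qperp (Q : QuadraticForm K V) (M : Submodule K V) : Submodule K V :=
  M.orthogonalBilin (QuadraticMap.polarBilin Q)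

/-- The Witt index of `(V, Q)` equals `n`. -/
def WittIndexEq (Q : QuadraticForm K V) (n : ℕ) : Prop :=
  (∀ U : Submodule K V, TotIso Q U → Module.finrank K U ≤ n) ∧
  ∃ U : Submodule K V, TotIso Q U ∧ Module.finrank K U = n

/-- `X` : nontrivial proper totally isotropic subspaces. -/
def qX (Q : QuadraticForm K V) : Set (Submodule K V) :=
  {U | U ≠ ⊥ ∧ U ≠ ⊤ ∧ TotIso Q U}

/-- `X̃` : members of `X` of dimension different from `n - 1`. -/
def qXt (Q : QuadraticForm K V) (n : ℕ) : Set (Submodule K V) :=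
  {U | U ∈ qX Q ∧ Module.finrank K U ≠ n - 1}

/-- `𝒰_n(V)` : `n`-dimensional non-totally-isotropic proper subspaces. -/
def Un (Q : QuadraticForm K V) (n : ℕ) : Set (Submodule K V) :=
  {A | A ≠ ⊤ ∧ Module.finrank K A = n ∧ ¬ TotIso Q A}

/-- The modified transversality relation `⫛̃`. -/
def TransvT (Q : QuadraticForm K V) (n : ℕ) (U W : Submodule K V) : Prop :=
  Transv U W ∨ (U ∈ qXt Q n ∧ W ∈ qXt Q n ∧ U = qperp Q U ∧ W = qperp Q W ∧
    Module.finrank K ↥(U ⊓ W) = 1)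

/-- The relation `U' @ A`. -/
def AtRel (Q : QuadraticForm K V) (U' A : Submodule K V) : Prop :=
  ¬ TotIso Q (qperp Q U' ⊓ A)

/-- `U' @ 𝓕`. -/
def AtRelS (Q : QuadraticForm K V) (U' : Submodule K V) (F : Set (Submodule K V)) : Prop :=
  ∀ A ∈ F, AtRel Q U' A

/-- The incidence relation of the oriflamme complex. -/
def oriflInc (n : ℕ) (U W : Submodule K V) : Prop :=
  U ≤ W ∨ W ≤ U ∨ Module.finrank K ↥(U ⊓ W) = n - 1

/-- `X_𝓔(V)` in the `D_n` setting (using `⫛̃`). -/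
def qXE (Q : QuadraticForm K V) (n : ℕ) (E : Set (Submodule K V)) : Set (Submodule K V) :=
  {U | U ∈ qX Q ∧ ∀ F ∈ E, TransvT Q n U F}

/-- `X̃_𝓔(V)` in the `D_n` setting. -/
def qXtE (Q : QuadraticForm K V) (n : ℕ) (E : Set (Submodule K V)) : Set (Submodule K V) :=
  {U | U ∈ qXt Q n ∧ ∀ F ∈ E, TransvT Q n U F}

/-- `𝓔(τ) = τ ∪ τ^⊥`. -/
def Etau (Q : QuadraticForm K V) (τ : Finset (Submodule K V)) : Set (Submodule K V) :=
  (↑τ : Set (Submodule K V)) ∪ (qperp Q '' ↑τ)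

end Quadratic

namespace ConeAux

open SCplx List

variable {V : Type u} {A : Type v}

/-- Inversion count underlying `relSign`. -/
def invN (σ l : List V) : ℕ :=
  (l.sublistsLen 2).countP fun s =>
    match s with
    | [a, b] => decide (pos σ b < pos σ a)
    | _ => false

lemma relSign_eq_pow (σ l : List V) : relSign σ l = (-1 : ℤ) ^ invN σ l := rfl

lemma pos_cons_self (x : V) (σ : List V) : pos (x :: σ) x = 0 := by
  simp [pos, List.findIdx_cons]

lemma pos_cons_ne (x y : V) (σ : List V) (h : y ≠ x) : pos (x :: σ) y = pos σ y + 1 := by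
  simp [pos, List.findIdx_cons, Ne.symm h]

lemma pos_inj {σ : List V} {a b : V} (ha : a ∈ σ) (hb : b ∈ σ)
    (h : pos σ a = pos σ b) : a = b := by
  have ha' : σ.findIdx (fun y => decide (y = a)) < σ.length :=
    List.findIdx_lt_length_of_exists ⟨a, ha, by simp⟩
  have hb' : σ.findIdx (fun y => decide (y = b)) < σ.length :=
    List.findIdx_lt_length_of_exists ⟨b, hb, by simp⟩
  have h1 : σ[pos σ a]'ha' = a := by
    show σ[σ.findIdx (fun y => decide (y = a))]'ha' = a
    simpa using (List.findIdx_getElem (w := ha'))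
  have h2 : σ[pos σ b]'hb' = b := by
    show σ[σ.findIdx (fun y => decide (y = b))]'hb' = b
    simpa using (List.findIdx_getElem (w := hb'))
  have hidx : ∀ (i j : ℕ) (hi : i < σ.length) (hj : j < σ.length), i = j → σ[i] = σ[j] := by
    rintro i j hi hj rfl; rfl
  exact h1.symm.trans ((hidx _ _ ha' hb' h).trans h2)

lemma invN_cons (σ : List V) (u : V) (m : List V) :
    invN σ (u :: m) = invN σ m + m.countP (fun w => decide (pos σ w < pos σ u)) := by
  unfold invN
  rw [List.sublistsLen_succ_cons, List.countP_append, List.countP_map,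
    List.sublistsLen_one, List.countP_map, List.countP_reverse]
  rfl

end ConeAux
namespace ConeAux

open SCplx List

variable {V : Type u} {A : Type v}

lemma invN_shift (x : V) (σ m : List V) (hm : ∀ u ∈ m, u ∈ σ) (hx : x ∉ σ) :
    invN (x :: σ) m = invN σ m := by
  unfold invN
  refine List.countP_congr ?_
  intro s hs
  obtain ⟨hsub, hlen⟩ := List.mem_sublistsLen.mp hs
  match s, hlen with
  | [a, b], _ =>
    have ha : a ∈ σ := hm a (hsub.subset (by simp))
    have hb : b ∈ σ := hm b (hsub.subset (by simp))
    have ha' : a ≠ x := fun h => hx (h ▸ ha)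
    have hb' : b ≠ x := fun h => hx (h ▸ hb)
    simp only [pos_cons_ne _ _ _ ha', pos_cons_ne _ _ _ hb']
    simp

lemma invN_split (x : V) (σ : List V) (hx : x ∉ σ) :
    ∀ (l₁ l₂ : List V), (∀ u ∈ l₁ ++ l₂, u ∈ σ) →
      invN (x :: σ) (l₁ ++ x :: l₂) = l₁.length + invN σ (l₁ ++ l₂) := by
  intro l₁
  induction l₁ with
  | nil =>
    intro l₂ hmem
    simp only [List.nil_append, List.length_nil, Nat.zero_add]
    rw [invN_cons]
    have h0 : l₂.countP (fun w => decide (pos (x :: σ) w < pos (x :: σ) x)) = 0 := by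
      rw [List.countP_eq_zero]
      intro a _
      simp [pos_cons_self]
    rw [h0, Nat.add_zero]
    exact invN_shift x σ l₂ (by simpa using hmem) hx
  | cons u t ih =>
    intro l₂ hmem
    have hu : u ∈ σ := hmem u (by simp)
    have hu' : u ≠ x := fun h => hx (h ▸ hu)
    have hmem' : ∀ w ∈ t ++ l₂, w ∈ σ := by
      intro w hw; exact hmem w (by simp at hw ⊢; tauto)
    have hcnt : ∀ m : List V, (∀ w ∈ m, w ∈ σ) →
        m.countP (fun w => decide (pos (x :: σ) w < pos (x :: σ) u)) =
        m.countP (fun w => decide (pos σ w < pos σ u)) := by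
      intro m hmσ
      refine List.countP_congr ?_
      intro w hw
      have hwσ : w ∈ σ := hmσ w hw
      have hw' : w ≠ x := fun h => hx (h ▸ hwσ)
      simp [pos_cons_ne _ _ _ hw', pos_cons_ne _ _ _ hu']
    have key : (t ++ x :: l₂).countP (fun w => decide (pos (x :: σ) w < pos (x :: σ) u)) =
        (t ++ l₂).countP (fun w => decide (pos σ w < pos σ u)) + 1 := by
      rw [List.countP_append, List.countP_cons, List.countP_append]
      have hxterm : (decide (pos (x :: σ) x < pos (x :: σ) u)) = true := by
        simp [pos_cons_self, pos_cons_ne _ _ _ hu']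
      rw [hxterm]
      rw [hcnt t (fun w hw => hmem' w (by simp [hw])),
        hcnt l₂ (fun w hw => hmem' w (by simp [hw]))]
      rfl
    calc invN (x :: σ) (u :: t ++ x :: l₂)
        = invN (x :: σ) (t ++ x :: l₂)
          + (t ++ x :: l₂).countP (fun w => decide (pos (x :: σ) w < pos (x :: σ) u)) := by
          rw [← invN_cons]; rfl
      _ = (t.length + invN σ (t ++ l₂))
          + ((t ++ l₂).countP (fun w => decide (pos σ w < pos σ u)) + 1) := by
          rw [ih l₂ hmem', key]
      _ = (u :: t).length + invN σ (u :: t ++ l₂) := by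
          have : invN σ (u :: (t ++ l₂)) = invN σ (t ++ l₂)
              + (t ++ l₂).countP (fun w => decide (pos σ w < pos σ u)) := invN_cons σ u (t ++ l₂)
          simp only [List.cons_append, this, List.length_cons]
          omega

end ConeAux
namespace ConeAux

open SCplx List

variable {V : Type u} {A : Type v}

lemma invN_swap_eq (σ : List V) {a b : V} (h : pos σ a ≠ pos σ b) :
    ∀ (l₁ l₂ : List V), (-1 : ℤ) ^ invN σ (l₁ ++ a :: b :: l₂) =
      -(-1 : ℤ) ^ invN σ (l₁ ++ b :: a :: l₂) := by
  intro l₁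
  induction l₁ with
  | nil =>
    intro l₂
    simp only [List.nil_append]
    rw [invN_cons, invN_cons, invN_cons σ b (a :: l₂), invN_cons σ a l₂,
      List.countP_cons, List.countP_cons]
    rcases lt_or_gt_of_ne h with hlt | hlt
    · have h1 : (decide (pos σ a < pos σ b)) = true := by simpa using hlt
      have h2 : (decide (pos σ b < pos σ a)) = false := by simp; omega
      rw [h1, h2]
      simp [pow_add]
      ring
    · have h1 : (decide (pos σ a < pos σ b)) = false := by simp; omega
      have h2 : (decide (pos σ b < pos σ a)) = true := by simpa using hlt
      rw [h1, h2]
      simp [pow_add]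
      ring
  | cons u t ih =>
    intro l₂
    have hperm : (t ++ a :: b :: l₂).Perm (t ++ b :: a :: l₂) :=
      List.Perm.append_left t (List.Perm.swap a b l₂).symm
    have hc : (t ++ a :: b :: l₂).countP (fun w => decide (pos σ w < pos σ u)) =
        (t ++ b :: a :: l₂).countP (fun w => decide (pos σ w < pos σ u)) :=
      hperm.countP_eq _
    simp only [List.cons_append]
    rw [invN_cons, invN_cons, pow_add, pow_add, hc, ih l₂]
    ring

lemma relSign_swap (σ : List V) {a b : V} (h : pos σ a ≠ pos σ b) (l₁ l₂ : List V) :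
    relSign σ (l₁ ++ a :: b :: l₂) = - relSign σ (l₁ ++ b :: a :: l₂) := by
  rw [relSign_eq_pow, relSign_eq_pow]
  exact invN_swap_eq σ h l₁ l₂

lemma chain_move_head [AddCommGroup A] {f : List V → A}
    (hf : ∀ (l₁ l₂ : List V) (a b : V), f (l₁ ++ a :: b :: l₂) = - f (l₁ ++ b :: a :: l₂)) :
    ∀ (l₁ : List V) (x : V) (l₂ : List V),
      f (l₁ ++ x :: l₂) = (-1 : ℤ) ^ l₁.length • f (x :: (l₁ ++ l₂)) := by
  intro l₁
  induction l₁ using List.reverseRecOn with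
  | nil => intro x l₂; simp
  | append_singleton m u ih =>
    intro x l₂
    have e1 : (m ++ [u]) ++ x :: l₂ = m ++ u :: x :: l₂ := by simp
    have e2 : (m ++ [u]) ++ l₂ = m ++ u :: l₂ := by simp
    rw [e1, hf m (l₂) u x, ih x (u :: l₂), e2]
    rw [List.length_append, List.length_singleton, pow_add]
    rw [← neg_smul]
    rw [mul_smul]
    simp

lemma chain_eq_relSign_smul [AddCommGroup A] :
    ∀ (σ : List V), σ.Nodup → ∀ (f : List V → A),
      (∀ (l₁ l₂ : List V) (a b : V), f (l₁ ++ a :: b :: l₂) = - f (l₁ ++ b :: a :: l₂)) →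
      ∀ l, l.Perm σ → f l = relSign σ l • f σ := by
  intro σ
  induction σ with
  | nil =>
    intro _ f _ l hl
    have : l = [] := hl.eq_nil
    subst this
    have : relSign ([] : List V) [] = 1 := by
      rw [relSign_eq_pow]
      unfold invN
      rw [List.sublistsLen_succ_nil]
      simp
    rw [this, one_smul]
  | cons x σ' ih =>
    intro hnd f hf l hl
    have hx : x ∉ σ' := (List.nodup_cons.mp hnd).1
    have hσ' : σ'.Nodup := (List.nodup_cons.mp hnd).2
    have hxl : x ∈ l := hl.mem_iff.mpr (by simp)
    obtain ⟨l₁, l₂, rfl⟩ := List.append_of_mem hxl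
    have hperm' : (l₁ ++ l₂).Perm σ' := by
      have h1 : (x :: (l₁ ++ l₂)).Perm (x :: σ') := List.perm_middle.symm.trans hl
      exact h1.cons_inv
    have hmem : ∀ u ∈ l₁ ++ l₂, u ∈ σ' := fun u hu => hperm'.mem_iff.mp hu
    have hg : ∀ (m₁ m₂ : List V) (a b : V),
        (fun m => f (x :: m)) (m₁ ++ a :: b :: m₂) = - (fun m => f (x :: m)) (m₁ ++ b :: a :: m₂) := by
      intro m₁ m₂ a b
      show f (x :: (m₁ ++ a :: b :: m₂)) = - f (x :: (m₁ ++ b :: a :: m₂))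
      rw [show x :: (m₁ ++ a :: b :: m₂) = (x :: m₁) ++ a :: b :: m₂ from rfl,
        show x :: (m₁ ++ b :: a :: m₂) = (x :: m₁) ++ b :: a :: m₂ from rfl]
      exact hf (x :: m₁) m₂ a b
    have hIH : f (x :: (l₁ ++ l₂)) = relSign σ' (l₁ ++ l₂) • f (x :: σ') :=
      ih hσ' (fun m => f (x :: m)) hg (l₁ ++ l₂) hperm'
    rw [chain_move_head hf l₁ x l₂, hIH]
    rw [relSign_eq_pow σ' (l₁ ++ l₂), relSign_eq_pow (x :: σ') (l₁ ++ x :: l₂),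
      invN_split x σ' hx l₁ l₂ hmem, pow_add, smul_smul]
end ConeAux
namespace ConeAux

open SCplx List

variable {V : Type u} {A : Type v}

lemma perm_toList_iff {s : Finset V} {l : List V} :
    l.Perm s.toList ↔ l.Nodup ∧ l.toFinset = s := by
  constructor
  · intro h
    exact ⟨h.nodup_iff.mpr s.nodup_toList,
      (List.toFinset_eq_of_perm _ _ h).trans s.toList_toFinset⟩
  · rintro ⟨h1, rfl⟩
    exact (List.toFinset_toList h1).symm

lemma oriented_of_perm {X : SCplx V} {j : ℤ} {σ l : List V} (hσ : X.Oriented j σ)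
    (h : l.Perm σ) : X.Oriented j l :=
  ⟨h.nodup_iff.mpr hσ.1, by rw [h.length_eq]; exact hσ.2.1,
    by rw [List.toFinset_eq_of_perm _ _ h]; exact hσ.2.2⟩

lemma unitChain_apply [AddCommGroup A] (σ : List V) (a : A) (l : List V) :
    unitChain σ a l = (unitChain σ (1 : ℤ) l) • a := by
  unfold unitChain
  split
  · rw [smul_assoc]; norm_num
  · rw [zero_smul]

lemma isChain_unitChain {X : SCplx V} [AddCommGroup A] {j : ℤ} {σ : List V}
    (hσ : X.Oriented j σ) (a : A) : X.IsChain A j (unitChain σ a) := by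
  refine ⟨?_, ?_, ?_⟩
  · intro l hl
    unfold unitChain
    rw [if_neg]
    intro hp
    exact hl (oriented_of_perm hσ hp)
  · intro l₁ l₂ x y
    by_cases hxy : x = y
    · subst hxy
      have hnp : ¬ (l₁ ++ x :: x :: l₂).Perm σ := by
        intro hp
        have : (l₁ ++ x :: x :: l₂).Nodup := hp.nodup_iff.mpr hσ.1
        simp [List.nodup_append] at this
      unfold unitChain
      rw [if_neg hnp, neg_zero]
    · by_cases hp : (l₁ ++ x :: y :: l₂).Perm σ
      · have hp' : (l₁ ++ y :: x :: l₂).Perm σ :=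
          ((List.Perm.append_left l₁ (List.Perm.swap y x l₂)).symm).trans hp
        have hxσ : x ∈ σ := hp.subset (by simp)
        have hyσ : y ∈ σ := hp.subset (by simp)
        have hpos : pos σ x ≠ pos σ y := fun h => hxy (pos_inj hxσ hyσ h)
        unfold unitChain
        rw [if_pos hp, if_pos hp', relSign_swap σ hpos l₁ l₂, neg_smul]
      · have hp' : ¬ (l₁ ++ y :: x :: l₂).Perm σ := by
          intro hq
          exact hp (((List.Perm.append_left l₁ (List.Perm.swap x y l₂)).symm).trans hq)
        unfold unitChain
        rw [if_neg hp, if_neg hp', neg_zero]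
  · refine Set.Finite.subset (List.finite_toSet σ.permutations) ?_
    intro l hl
    simp only [Set.mem_setOf_eq] at hl
    have : l.Perm σ := by
      by_contra hnp
      exact hl (by unfold unitChain; rw [if_neg hnp])
    simpa [List.mem_permutations] using this

lemma isChain_zero (X : SCplx V) [AddCommGroup A] (j : ℤ) : X.IsChain A j 0 := by
  exact ⟨fun _ _ => rfl, fun _ _ _ _ => by simp, by simp⟩

lemma IsChain.add {X : SCplx V} [AddCommGroup A] {j : ℤ} {f g : List V → A}
    (hf : X.IsChain A j f) (hg : X.IsChain A j g) : X.IsChain A j (f + g) := by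
  refine ⟨fun l hl => by simp [hf.1 l hl, hg.1 l hl], fun l₁ l₂ a b => ?_, ?_⟩
  · simp only [Pi.add_apply, hf.2.1 l₁ l₂ a b, hg.2.1 l₁ l₂ a b, neg_add]
  · refine Set.Finite.subset (hf.2.2.union hg.2.2) ?_
    intro l hl
    simp only [Set.mem_setOf_eq, Pi.add_apply] at hl
    by_contra hc
    simp only [Set.mem_union, Set.mem_setOf_eq, not_or, not_not] at hc
    rw [hc.1, hc.2, add_zero] at hl
    exact hl rfl

lemma IsChain.neg {X : SCplx V} [AddCommGroup A] {j : ℤ} {f : List V → A}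
    (hf : X.IsChain A j f) : X.IsChain A j (-f) := by
  refine ⟨fun l hl => by simp [hf.1 l hl], fun l₁ l₂ a b => ?_, ?_⟩
  · simp only [Pi.neg_apply, hf.2.1 l₁ l₂ a b]
  · refine Set.Finite.subset hf.2.2 ?_
    intro l hl
    simp only [Set.mem_setOf_eq, Pi.neg_apply, neg_ne_zero] at hl
    exact hl

lemma isChain_finsetSum {X : SCplx V} [AddCommGroup A] {j : ℤ} {ι : Type*} (T : Finset ι)
    (F : ι → List V → A) (h : ∀ i ∈ T, X.IsChain A j (F i)) :
    X.IsChain A j (∑ i ∈ T, F i) := by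
  classical
  induction T using Finset.induction_on with
  | empty => simpa using isChain_zero X j
  | @insert _ _ hnotmem ih =>
    rw [Finset.sum_insert hnotmem]
    exact IsChain.add (h _ (by simp)) (ih (fun i hi => h i (by simp [hi])))

lemma IsChain.finite_toList {X : SCplx V} [AddCommGroup A] {j : ℤ} {f : List V → A}
    (hf : X.IsChain A j f) : {s : Finset V | f s.toList ≠ 0}.Finite := by
  refine Set.Finite.subset (hf.2.2.image List.toFinset) ?_
  intro s hs
  exact ⟨s.toList, hs, Finset.toList_toFinset s⟩

lemma IsChain.oriented_toList {X : SCplx V} [AddCommGroup A] {j : ℤ} {f : List V → A}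
    (hf : X.IsChain A j f) {s : Finset V} (hs : f s.toList ≠ 0) : X.Oriented j s.toList := by
  by_contra hc
  exact hs (hf.1 _ hc)

lemma supp_subset_faces {X : SCplx V} [AddCommGroup A] {j : ℤ} {f : List V → A}
    (hf : X.IsChain A j f) : supp f ⊆ X.faces := by
  rintro s ⟨l, hnd, rfl, hne⟩
  by_contra hc
  refine hne (hf.1 l ?_)
  intro ho
  exact hc ho.2.2

end ConeAux
namespace ConeAux

open SCplx List

variable {V : Type u} {A : Type v}

lemma IsChain.bdry_chain {X : SCplx V} [AddCommGroup A] {j : ℤ} {f : List V → A}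
    (hf : X.IsChain A j f) : X.IsChain A (j - 1) (bdry f) := by
  refine ⟨?_, ?_, ?_⟩
  · intro l hl
    have hterm : ∀ u : V, f (u :: l) = 0 := by
      intro u
      by_contra hne
      have ho : X.Oriented j (u :: l) := by
        by_contra hc; exact hne (hf.1 _ hc)
      refine hl ⟨(List.nodup_cons.mp ho.1).2, ?_, ?_⟩
      · have := ho.2.1
        simp only [List.length_cons] at this
        push_cast at this ⊢
        omega
      · refine X.down_closed _ ho.2.2 l.toFinset ?_
        rw [List.toFinset_cons]
        exact Finset.subset_insert _ _
    show (∑ᶠ u : V, f (u :: l)) = 0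
    simp [hterm]
  · intro l₁ l₂ a b
    show (∑ᶠ u : V, f (u :: (l₁ ++ a :: b :: l₂))) = -∑ᶠ u : V, f (u :: (l₁ ++ b :: a :: l₂))
    rw [← finsum_neg_distrib]
    refine finsum_congr fun u => ?_
    rw [show u :: (l₁ ++ a :: b :: l₂) = (u :: l₁) ++ a :: b :: l₂ from rfl,
      hf.2.1 (u :: l₁) l₂ a b]
    rfl
  · refine Set.Finite.subset (hf.2.2.image List.tail) ?_
    intro l hl
    simp only [Set.mem_setOf_eq] at hl
    have : ∃ u : V, f (u :: l) ≠ 0 := by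
      by_contra hc
      push_neg at hc
      exact hl (by show (∑ᶠ u : V, f (u :: l)) = 0; simp [hc])
    obtain ⟨u, hu⟩ := this
    exact ⟨u :: l, hu, rfl⟩

lemma finsum_finsetSum_comm {ι κ : Type*} {M : Type*} [AddCommMonoid M] (T : Finset ι)
    (F : ι → κ → M) (h : ∀ i ∈ T, (Function.support (F i)).Finite) :
    ∑ᶠ u : κ, ∑ i ∈ T, F i u = ∑ i ∈ T, ∑ᶠ u : κ, F i u := by
  classical
  induction T using Finset.induction_on with
  | empty => simp
  | @insert a T' hnotmem ih =>
    have hsupp : (Function.support (fun u => ∑ i ∈ T', F i u)).Finite := by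
      refine Set.Finite.subset (Set.Finite.biUnion T'.finite_toSet
        (fun i hi => h i (Finset.mem_insert_of_mem (Finset.mem_coe.mp hi)))) ?_
      intro u hu
      simp only [Function.mem_support] at hu
      rw [Set.mem_iUnion₂]
      by_contra hc
      push_neg at hc
      exact hu (Finset.sum_eq_zero fun i hi => by
        have := hc i (Finset.mem_coe.mpr hi)
        simpa [Function.mem_support] using this)

    calc ∑ᶠ u : κ, ∑ i ∈ insert a T', F i u
        = ∑ᶠ u : κ, (F a u + ∑ i ∈ T', F i u) := by
          refine finsum_congr fun u => Finset.sum_insert hnotmem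
      _ = (∑ᶠ u : κ, F a u) + ∑ᶠ u : κ, ∑ i ∈ T', F i u :=
          finsum_add_distrib (h a (by simp)) hsupp
      _ = ∑ i ∈ insert a T', ∑ᶠ u : κ, F i u := by
          rw [Finset.sum_insert hnotmem, ih (fun i hi => h i (by simp [hi]))]

end ConeAux
namespace ConeAux

open SCplx List

variable {V : Type u} {A : Type v}

lemma relSign_nil : relSign ([] : List V) ([] : List V) = 1 := by
  rw [relSign_eq_pow]
  unfold invN
  rw [List.sublistsLen_succ_nil]
  simp

/-- The elementary integral chain attached to a face. -/
def eC : Finset V → List V → ℤ := fun s => unitChain s.toList (1 : ℤ)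

/-- Extension of a pointwise family of integral chains to `A`-chains. -/
def extc [AddCommGroup A] (Φ : Finset V → List V → ℤ) (f : List V → A) : List V → A :=
  fun l => ∑ᶠ s : Finset V, (Φ s l) • f s.toList

lemma extc_support_subset [AddCommGroup A] (Φ : Finset V → List V → ℤ) (f : List V → A)
    (l : List V) :
    Function.support (fun s : Finset V => (Φ s l) • f s.toList) ⊆
      {s : Finset V | f s.toList ≠ 0} := by
  intro s hs
  simp only [Function.mem_support] at hs
  intro h0
  exact hs (by rw [h0, smul_zero])

lemma eC_eq_zero_of_not_perm {s : Finset V} {l : List V} (h : ¬ l.Perm s.toList) :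
    eC s l = 0 := by
  unfold eC unitChain
  rw [if_neg h]

lemma eC_eq_relSign {s : Finset V} {l : List V} (h : l.Perm s.toList) :
    eC s l = relSign s.toList l := by
  unfold eC unitChain
  rw [if_pos h, smul_eq_mul, mul_one]

/-- Decomposition: every chain is recovered by extending the elementary chains. -/
lemma extc_eC {X : SCplx V} [AddCommGroup A] {j : ℤ} {f : List V → A}
    (hf : X.IsChain A j f) : extc eC f = f := by
  funext l
  show (∑ᶠ s : Finset V, (eC s l) • f s.toList) = f l
  by_cases hnd : l.Nodup
  · rw [finsum_eq_single _ l.toFinset ?_]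
    · have hperm : l.Perm l.toFinset.toList := perm_toList_iff.mpr ⟨hnd, rfl⟩
      rw [eC_eq_relSign hperm]
      exact (chain_eq_relSign_smul _ l.toFinset.nodup_toList f hf.2.1 l hperm).symm
    · intro s hs
      have : ¬ l.Perm s.toList := by
        intro hp
        exact hs (perm_toList_iff.mp hp).2.symm
      rw [eC_eq_zero_of_not_perm this, zero_smul]
  · have h0 : f l = 0 := hf.1 l (fun ho => hnd ho.1)
    rw [h0]
    refine finsum_eq_zero_of_forall_eq_zero fun s => ?_
    have : ¬ l.Perm s.toList := fun hp => hnd (hp.nodup_iff.mpr s.nodup_toList)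
    rw [eC_eq_zero_of_not_perm this, zero_smul]

lemma IsChain.zsmul {X : SCplx V} [AddCommGroup A] {j : ℤ} {f : List V → A}
    (hf : X.IsChain A j f) (z : ℤ) : X.IsChain A j (z • f) := by
  refine ⟨fun l hl => by simp [hf.1 l hl], fun l₁ l₂ a b => ?_, ?_⟩
  · simp only [Pi.smul_apply, hf.2.1 l₁ l₂ a b, smul_neg]
  · refine Set.Finite.subset hf.2.2 ?_
    intro l hl
    simp only [Set.mem_setOf_eq, Pi.smul_apply] at hl
    intro h0
    exact hl (by rw [h0, smul_zero])

lemma extc_add {X : SCplx V} [AddCommGroup A] {j : ℤ} (Φ : Finset V → List V → ℤ)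
    {f g : List V → A} (hf : X.IsChain A j f) (hg : X.IsChain A j g) :
    extc Φ (f + g) = extc Φ f + extc Φ g := by
  funext l
  show (∑ᶠ s : Finset V, (Φ s l) • (f + g) s.toList) = _
  have : ∀ s : Finset V, (Φ s l) • (f + g) s.toList
      = (Φ s l) • f s.toList + (Φ s l) • g s.toList := by
    intro s; rw [Pi.add_apply, smul_add]
  rw [finsum_congr this, finsum_add_distrib
    (Set.Finite.subset (IsChain.finite_toList hf) (extc_support_subset Φ f l))
    (Set.Finite.subset (IsChain.finite_toList hg) (extc_support_subset Φ g l))]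
  rfl

lemma extc_add_left {X : SCplx V} [AddCommGroup A] {j : ℤ} (Φ₁ Φ₂ : Finset V → List V → ℤ)
    {f : List V → A} (hf : X.IsChain A j f) :
    extc (fun s => Φ₁ s + Φ₂ s) f = extc Φ₁ f + extc Φ₂ f := by
  funext l
  show (∑ᶠ s : Finset V, ((Φ₁ s + Φ₂ s) l) • f s.toList) = _
  have : ∀ s : Finset V, ((Φ₁ s + Φ₂ s) l) • f s.toList
      = (Φ₁ s l) • f s.toList + (Φ₂ s l) • f s.toList := by
    intro s; rw [Pi.add_apply, add_smul]
  rw [finsum_congr this, finsum_add_distrib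
    (Set.Finite.subset (IsChain.finite_toList hf) (extc_support_subset Φ₁ f l))
    (Set.Finite.subset (IsChain.finite_toList hf) (extc_support_subset Φ₂ f l))]
  rfl

lemma extc_congr [AddCommGroup A] {Φ₁ Φ₂ : Finset V → List V → ℤ} {f : List V → A}
    (h : ∀ s : Finset V, f s.toList ≠ 0 → Φ₁ s = Φ₂ s) :
    extc Φ₁ f = extc Φ₂ f := by
  funext l
  refine finsum_congr fun s => ?_
  by_cases hs : f s.toList = 0
  · rw [hs, smul_zero, smul_zero]
  · rw [h s hs]

lemma bdry_extc {X : SCplx V} [AddCommGroup A] {j : ℤ} {Φ : Finset V → List V → ℤ}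
    {f : List V → A} (hf : X.IsChain A j f)
    (hΦ : ∀ s : Finset V, f s.toList ≠ 0 → (Function.support (Φ s)).Finite) :
    bdry (extc Φ f) = extc (fun s => bdry (Φ s)) f := by
  classical
  funext l
  have hfin := (IsChain.finite_toList hf)
  set T : Finset (Finset V) := hfin.toFinset with hT
  have hmemT : ∀ s : Finset V, s ∈ T ↔ f s.toList ≠ 0 := by
    intro s; simp [hT, Set.Finite.mem_toFinset]
  have hcons : ∀ (s : Finset V), f s.toList ≠ 0 →
      (Function.support (fun u : V => (Φ s (u :: l)) • f s.toList)).Finite := by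
    intro s hs
    have : Function.support (fun u : V => (Φ s (u :: l)) • f s.toList) ⊆
        (fun u : V => u :: l) ⁻¹' (Function.support (Φ s)) := by
      intro u hu
      simp only [Function.mem_support] at hu ⊢
      intro h0
      exact hu (by rw [h0, zero_smul])
    refine Set.Finite.subset (Set.Finite.preimage ?_ (hΦ s hs)) this
    intro u _ w _ huw
    exact (List.cons.injEq _ _ _ _ ▸ huw).1
  show (∑ᶠ u : V, extc Φ f (u :: l)) = ∑ᶠ s : Finset V, (bdry (Φ s) l) • f s.toList
  have step1 : ∀ u : V, extc Φ f (u :: l) = ∑ s ∈ T, (Φ s (u :: l)) • f s.toList := by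
    intro u
    refine finsum_eq_finset_sum_of_support_subset _ ?_
    intro s hs
    have := extc_support_subset Φ f (u :: l) hs
    simpa [hmemT] using this
  rw [finsum_congr step1]
  rw [finsum_finsetSum_comm T _ (fun s hs => hcons s ((hmemT s).mp hs))]
  have step2 : ∀ s ∈ T, (∑ᶠ u : V, (Φ s (u :: l)) • f s.toList)
      = (bdry (Φ s) l) • f s.toList := by
    intro s hs
    have hsupp : (Function.support (fun u : V => Φ s (u :: l))).Finite := by
      have hsub : Function.support (fun u : V => Φ s (u :: l)) ⊆
          (fun u : V => u :: l) ⁻¹' (Function.support (Φ s)) := fun u hu => hu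
      refine Set.Finite.subset (Set.Finite.preimage ?_ (hΦ s ((hmemT s).mp hs))) hsub
      intro u _ w _ huw
      exact (List.cons.injEq _ _ _ _ ▸ huw).1
    rw [← finsum_smul' hsupp]
    rfl
  rw [Finset.sum_congr rfl step2]
  refine (finsum_eq_finset_sum_of_support_subset _ ?_).symm
  intro s hs
  have := extc_support_subset (fun s => bdry (Φ s)) f l hs
  simpa [hmemT] using this

end ConeAux
namespace ConeAux

open SCplx List

variable {V : Type u} {A : Type v}

section C

variable {X : SCplx V} {k : ℤ} {v : V} {c : ℤ → (List V → ℤ) → (List V → ℤ)}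

lemma c_zero (hc : X.IsConeFun ℤ k v c) {j : ℤ} (hj : -1 ≤ j) (hjk : j ≤ k) :
    c j 0 = 0 := by
  have h := hc.map_add j hj hjk 0 0 (isChain_zero X j) (isChain_zero X j)
  rw [add_zero] at h
  exact (add_eq_right.mp h.symm)

lemma c_neg (hc : X.IsConeFun ℤ k v c) {j : ℤ} (hj : -1 ≤ j) (hjk : j ≤ k)
    {u : List V → ℤ} (hu : X.IsChain ℤ j u) : c j (-u) = - c j u := by
  have h := hc.map_add j hj hjk u (-u) hu (IsChain.neg hu)
  rw [add_neg_cancel, c_zero hc hj hjk] at h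
  exact eq_neg_of_add_eq_zero_right h.symm

lemma c_zsmul (hc : X.IsConeFun ℤ k v c) {j : ℤ} (hj : -1 ≤ j) (hjk : j ≤ k)
    {u : List V → ℤ} (hu : X.IsChain ℤ j u) (z : ℤ) : c j (z • u) = z • c j u := by
  induction z using Int.induction_on with
  | zero => rw [zero_smul, zero_smul, c_zero hc hj hjk]
  | succ n ih =>
    have : ((n : ℤ) + 1) • u = (n : ℤ) • u + u := by rw [add_smul, one_smul]
    rw [this, hc.map_add j hj hjk _ u (IsChain.zsmul hu (n : ℤ)) hu, ih, add_smul, one_smul]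
  | pred n ih =>
    have : (-(n : ℤ) - 1) • u = (-(n : ℤ)) • u + (-u) := by
      rw [sub_smul, one_smul, sub_eq_add_neg]
    rw [this, hc.map_add j hj hjk _ (-u) (IsChain.zsmul hu (-(n : ℤ))) (IsChain.neg hu),
      ih, c_neg hc hj hjk hu, sub_smul, one_smul, sub_eq_add_neg]

lemma c_finsetSum (hc : X.IsConeFun ℤ k v c) {j : ℤ} (hj : -1 ≤ j) (hjk : j ≤ k)
    {ι : Type*} (T : Finset ι) (F : ι → List V → ℤ) (h : ∀ i ∈ T, X.IsChain ℤ j (F i)) :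
    c j (∑ i ∈ T, F i) = ∑ i ∈ T, c j (F i) := by
  classical
  induction T using Finset.induction_on with
  | empty => simpa using c_zero hc hj hjk
  | @insert a T' hnotmem ih =>
    rw [Finset.sum_insert hnotmem, Finset.sum_insert hnotmem,
      hc.map_add j hj hjk _ _ (h a (by simp))
        (isChain_finsetSum T' F (fun i hi => h i (by simp [hi]))),
      ih (fun i hi => h i (by simp [hi]))]

lemma c_eq_extc (hc : X.IsConeFun ℤ k v c) {j : ℤ} (hj : -1 ≤ j) (hjk : j ≤ k)
    {h : List V → ℤ} (hh : X.IsChain ℤ j h) :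
    c j h = extc (fun s => c j (eC s)) h := by
  classical
  set T : Finset (Finset V) := (IsChain.finite_toList hh).toFinset with hT
  have hmemT : ∀ s : Finset V, s ∈ T ↔ h s.toList ≠ 0 := by
    intro s; simp [hT]
  have hchain : ∀ s ∈ T, X.IsChain ℤ j ((h s.toList) • eC s) := by
    intro s hs
    exact IsChain.zsmul (isChain_unitChain (IsChain.oriented_toList hh ((hmemT s).mp hs)) 1) _
  have hdec : h = ∑ s ∈ T, (h s.toList) • eC s := by
    funext l
    calc h l = extc eC h l := by rw [extc_eC hh]
      _ = ∑ s ∈ T, (eC s l) • h s.toList := by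
          refine finsum_eq_finset_sum_of_support_subset _ ?_
          intro s hs
          have := extc_support_subset eC h l hs
          simpa [hmemT] using this
      _ = (∑ s ∈ T, (h s.toList) • eC s) l := by
          rw [Finset.sum_apply]
          refine Finset.sum_congr rfl fun s _ => ?_
          rw [Pi.smul_apply, smul_eq_mul, smul_eq_mul, mul_comm]
  have step : c j h = ∑ s ∈ T, (h s.toList) • c j (eC s) := by
    conv_lhs => rw [hdec]
    rw [c_finsetSum hc hj hjk T _ hchain]
    refine Finset.sum_congr rfl fun s hs => ?_
    exact c_zsmul hc hj hjk
      (isChain_unitChain (IsChain.oriented_toList hh ((hmemT s).mp hs)) 1) _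
  funext l
  rw [step]
  show _ = ∑ᶠ s : Finset V, (c j (eC s) l) • h s.toList
  rw [finsum_eq_finset_sum_of_support_subset _ (s := T) ?_]
  · rw [Finset.sum_apply]
    refine Finset.sum_congr rfl fun s _ => ?_
    rw [Pi.smul_apply, smul_eq_mul, smul_eq_mul, mul_comm]
  · intro s hs
    have := extc_support_subset (fun s => c j (eC s)) h l hs
    simpa [hmemT] using this

lemma extc_extc [AddCommGroup A] (hc : X.IsConeFun ℤ k v c) {j j' : ℤ}
    (hj' : -1 ≤ j') (hj'k : j' ≤ k) {Ψ : Finset V → List V → ℤ} {f : List V → A}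
    (hf : X.IsChain A j f) (hΨ : ∀ s : Finset V, f s.toList ≠ 0 → X.IsChain ℤ j' (Ψ s)) :
    extc (fun t => c j' (eC t)) (extc Ψ f) = extc (fun s => c j' (Ψ s)) f := by
  classical
  funext l
  set T : Finset (Finset V) := (IsChain.finite_toList hf).toFinset with hT
  have hmemT : ∀ s : Finset V, s ∈ T ↔ f s.toList ≠ 0 := by
    intro s; simp [hT]
  have step1 : ∀ t0 : Finset V, extc Ψ f t0.toList
      = ∑ s ∈ T, (Ψ s t0.toList) • f s.toList := by
    intro t0
    refine finsum_eq_finset_sum_of_support_subset _ ?_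
    intro s hs
    have := extc_support_subset Ψ f t0.toList hs
    simpa [hmemT] using this
  show (∑ᶠ t : Finset V, (c j' (eC t) l) • extc Ψ f t.toList)
      = ∑ᶠ s : Finset V, (c j' (Ψ s) l) • f s.toList
  have step2 : ∀ t : Finset V, (c j' (eC t) l) • extc Ψ f t.toList
      = ∑ s ∈ T, (c j' (eC t) l * Ψ s t.toList) • f s.toList := by
    intro t
    rw [step1 t, Finset.smul_sum]
    refine Finset.sum_congr rfl fun s _ => ?_
    rw [smul_smul]
  rw [finsum_congr step2]
  rw [finsum_finsetSum_comm T _ ?hfin]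
  case hfin =>
    intro s hs
    refine Set.Finite.subset (IsChain.finite_toList (hΨ s ((hmemT s).mp hs))) ?_
    intro t ht
    simp only [Function.mem_support] at ht
    intro h0
    exact ht (by rw [h0, mul_zero, zero_smul])
  have step3 : ∀ s ∈ T, (∑ᶠ t : Finset V, (c j' (eC t) l * Ψ s t.toList) • f s.toList)
      = (c j' (Ψ s) l) • f s.toList := by
    intro s hs
    have hΨs := hΨ s ((hmemT s).mp hs)
    have hsupp : (Function.support (fun t : Finset V => c j' (eC t) l * Ψ s t.toList)).Finite := by
      refine Set.Finite.subset (IsChain.finite_toList hΨs) ?_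
      intro t ht
      simp only [Function.mem_support] at ht
      intro h0
      exact ht (by rw [h0, mul_zero])
    rw [← finsum_smul' hsupp]
    congr 1
    rw [c_eq_extc hc hj' hj'k hΨs]
    show (∑ᶠ t : Finset V, c j' (eC t) l * Ψ s t.toList)
        = ∑ᶠ t : Finset V, (c j' (eC t) l) • Ψ s t.toList
    refine finsum_congr fun t => ?_
    rw [smul_eq_mul]
  rw [Finset.sum_congr rfl step3]
  refine (finsum_eq_finset_sum_of_support_subset _ ?_).symm
  intro s hs
  have := extc_support_subset (fun s => c j' (Ψ s)) f l hs
  simpa [hmemT] using this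

end C

end ConeAux
namespace ConeAux

open SCplx List

variable {V : Type u} {A : Type v}

section Cone

variable {X : SCplx V} {k : ℤ} {v : V} {c : ℤ → (List V → ℤ) → (List V → ℤ)}
variable [AddCommGroup A]

/-- The `A`-cone function induced by an integral cone function. -/
def cAc (c : ℤ → (List V → ℤ) → (List V → ℤ)) : ℤ → (List V → A) → (List V → A) :=
  fun j f => extc (fun s => c j (eC s)) f

lemma cAc_isConeFun (hc : X.IsConeFun ℤ k v c) : X.IsConeFun A k v (cAc c) := by
  have hterm : ∀ {j : ℤ}, -1 ≤ j → j ≤ k → ∀ {f : List V → A} (hf : X.IsChain A j f)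
      (s : Finset V), f s.toList ≠ 0 → X.IsChain ℤ (j + 1) (c j (eC s)) := by
    intro j hj hjk f hf s hs
    exact hc.map_chain j hj hjk _ (isChain_unitChain (IsChain.oriented_toList hf hs) 1)
  refine ⟨hc.apex_mem, ?_, ?_, ?_, ?_⟩
  · -- map_unit_empty
    intro a
    funext l
    show (∑ᶠ s : Finset V, (c (-1) (eC s) l) • unitChain [] a s.toList) = unitChain [v] a l
    rw [finsum_eq_single _ (∅ : Finset V) ?_]
    · have h1 : ((∅ : Finset V).toList) = ([] : List V) := Finset.toList_empty
      have h2 : unitChain ([] : List V) a ([] : List V) = a := by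
        unfold unitChain
        rw [if_pos (List.Perm.refl _), relSign_nil, one_smul]
      have h3 : eC (∅ : Finset V) = unitChain ([] : List V) (1 : ℤ) := by
        unfold eC; rw [h1]
      rw [h1, h2, h3, hc.map_unit_empty 1, ← unitChain_apply]
    · intro s hs
      have : ¬ (s.toList).Perm ([] : List V) := by
        intro hp
        exact hs (Finset.toList_eq_nil.mp hp.eq_nil)
      have h0 : unitChain ([] : List V) a s.toList = 0 := by
        unfold unitChain
        rw [if_neg this]
      rw [h0, smul_zero]
  · -- map_chain
    intro j hj hjk f hf
    refine ⟨?_, ?_, ?_⟩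
    · intro l hl
      refine finsum_eq_zero_of_forall_eq_zero fun s => ?_
      show (c j (eC s) l) • f s.toList = 0
      by_cases hs : f s.toList = 0
      · rw [hs, smul_zero]
      · rw [(hterm hj hjk hf s hs).1 l hl, zero_smul]
    · intro l₁ l₂ a b
      show (∑ᶠ s : Finset V, _) = -(∑ᶠ s : Finset V, _)
      rw [← finsum_neg_distrib]
      refine finsum_congr fun s => ?_
      show (c j (eC s) (l₁ ++ a :: b :: l₂)) • f s.toList
        = -((c j (eC s) (l₁ ++ b :: a :: l₂)) • f s.toList)
      by_cases hs : f s.toList = 0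
      · rw [hs, smul_zero, smul_zero, neg_zero]
      · rw [(hterm hj hjk hf s hs).2.1 l₁ l₂ a b, neg_smul]
    · refine Set.Finite.subset (Set.Finite.biUnion (IsChain.finite_toList hf)
        (fun s hs => (hterm hj hjk hf s hs).2.2)) ?_
      intro l hl
      simp only [Set.mem_setOf_eq] at hl
      have : ∃ s : Finset V, f s.toList ≠ 0 ∧ c j (eC s) l ≠ 0 := by
        by_contra hcon
        push_neg at hcon
        refine hl (finsum_eq_zero_of_forall_eq_zero fun s => ?_)
        show (c j (eC s) l) • f s.toList = 0
        by_cases hs : f s.toList = 0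
        · rw [hs, smul_zero]
        · rw [hcon s hs, zero_smul]
      obtain ⟨s, hs1, hs2⟩ := this
      exact Set.mem_biUnion hs1 hs2
  · -- map_add
    intro j hj hjk f g hf hg
    exact extc_add _ hf hg
  · -- cone_eq
    intro j hj0 hjk f hf
    have hj : (-1 : ℤ) ≤ j := le_trans (by norm_num) hj0
    have stepA : bdry (cAc c j f) = extc (fun s => bdry (c j (eC s))) f := by
      refine bdry_extc hf fun s hs => ?_
      exact (hterm hj hjk hf s hs).2.2
    have stepB : cAc c (j - 1) (bdry f) = extc (fun s => c (j - 1) (bdry (eC s))) f := by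
      have h1 : bdry f = extc (fun s => bdry (eC s)) f := by
        conv_lhs => rw [← extc_eC hf]
        refine bdry_extc hf fun s hs => ?_
        exact (isChain_unitChain (IsChain.oriented_toList hf hs) (1 : ℤ)).2.2
      show extc (fun t => c (j - 1) (eC t)) (bdry f) = _
      rw [h1]
      refine extc_extc hc (by omega) (by omega) hf fun s hs => ?_
      exact IsChain.bdry_chain (isChain_unitChain (IsChain.oriented_toList hf hs) (1 : ℤ))
    rw [stepA, stepB, ← extc_add_left _ _ hf]
    have : extc (fun s => bdry (c j (eC s)) + c (j - 1) (bdry (eC s))) f = extc eC f := by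
      refine extc_congr fun s hs => ?_
      exact hc.cone_eq j hj0 hjk (eC s)
        (isChain_unitChain (IsChain.oriented_toList hf hs) (1 : ℤ))
    rw [this, extc_eC hf]

end Cone

end ConeAux
namespace ConeAux

open SCplx List

variable {V : Type u} {A : Type v}

section Rad

variable {X : SCplx V} {k : ℤ} {v : V} {c : ℤ → (List V → ℤ) → (List V → ℤ)}
variable [AddCommGroup A]

lemma oriented_toFinset_toList {j : ℤ} {σ : List V} (hσ : X.Oriented j σ) :
    X.Oriented j σ.toFinset.toList :=
  oriented_of_perm hσ (List.toFinset_toList hσ.1)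

lemma cAc_unitChain_eval (σ : List V) (a : A) (j : ℤ) (l : List V) :
    cAc c j (unitChain σ a) l
      = (c j (eC σ.toFinset) l) • unitChain σ a σ.toFinset.toList := by
  show (∑ᶠ s : Finset V, (c j (eC s) l) • unitChain σ a s.toList) = _
  refine finsum_eq_single _ σ.toFinset fun s hs => ?_
  show (c j (eC s) l) • unitChain σ a s.toList = 0
  have hnp : ¬ (s.toList).Perm σ := by
    intro hp
    exact hs ((Finset.toList_toFinset s).symm.trans (List.toFinset_eq_of_perm _ _ hp))
  have h0 : unitChain σ a s.toList = 0 := by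
    unfold unitChain
    rw [if_neg hnp]
  rw [h0, smul_zero]

lemma cAc_coneRad_le (hfin : X.faces.Finite) (hc : X.IsConeFun ℤ k v c) (hk : -1 ≤ k) :
    X.coneRad (cAc c : ℤ → (List V → A) → (List V → A)) k ≤ X.coneRad c k := by
  have hbdd : BddAbove {m : ℕ | ∃ (σ : List V) (a : ℤ),
      X.Oriented k σ ∧ (supp (c k (unitChain σ a))).ncard = m} := by
    refine ⟨X.faces.ncard, ?_⟩
    rintro m ⟨σ, a, hσ, rfl⟩
    exact Set.ncard_le_ncard (supp_subset_faces
      (hc.map_chain k hk le_rfl _ (isChain_unitChain hσ a))) hfin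
  have hle : ∀ m ∈ {m : ℕ | ∃ (σ : List V) (a : A),
      X.Oriented k σ ∧ (supp (cAc c k (unitChain σ a))).ncard = m}, m ≤ X.coneRad c k := by
    rintro m ⟨σ, a, hσ, rfl⟩
    have horA : X.Oriented k σ.toFinset.toList := oriented_toFinset_toList hσ
    have hchain : X.IsChain ℤ (k + 1) (c k (eC σ.toFinset)) :=
      hc.map_chain k hk le_rfl _ (isChain_unitChain horA (1 : ℤ))
    have hsub : supp (cAc c k (unitChain σ a)) ⊆ supp (c k (eC σ.toFinset)) := by
      rintro t ⟨l, hnd, rfl, hne⟩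
      rw [cAc_unitChain_eval] at hne
      have h1 : c k (eC σ.toFinset) l ≠ 0 := fun h0 => hne (by rw [h0, zero_smul])
      exact ⟨l, hnd, rfl, h1⟩
    have hsuppfin : (supp (c k (eC σ.toFinset))).Finite :=
      hfin.subset (supp_subset_faces hchain)
    calc (supp (cAc c k (unitChain σ a))).ncard
        ≤ (supp (c k (eC σ.toFinset))).ncard := Set.ncard_le_ncard hsub hsuppfin
      _ ≤ X.coneRad c k := le_csSup hbdd ⟨σ.toFinset.toList, 1, horA, rfl⟩
  show sSup _ ≤ _
  rcases Set.eq_empty_or_nonempty {m : ℕ | ∃ (σ : List V) (a : A),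
      X.Oriented k σ ∧ (supp (cAc c k (unitChain σ a))).ncard = m} with he | hne
  · rw [he, csSup_empty]
    exact Nat.zero_le _
  · exact csSup_le hne hle

end Rad

end ConeAux

/-- For a finite `n`-dimensional simplicial complex `X` and `-1 ≤ k ≤ n-1`,
for every finitely generated abelian group `A` one has `Rad_k(X, A) ≤ Rad_k(X, ℤ)`;
in particular, if `X` admits a `(k, ℤ)`-cone function, then it admits a `(k, A)`-cone
function whose `k`-th radius is at most `Rad_k(X, ℤ)`. -/
theorem cone_radius_le_int_cone_radius {V : Type u} (X : SCplx V) (hfin : X.faces.Finite)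
    (n : ℤ) (hdim : X.DimEq n) (k : ℤ) (hk₁ : -1 ≤ k) (hk₂ : k ≤ n - 1)
    (A : Type v) [AddCommGroup A] [AddGroup.FG A] :
    X.complexRad A k ≤ X.complexRad ℤ k ∧
      ((∃ (v : V) (c : ℤ → (List V → ℤ) → (List V → ℤ)), X.IsConeFun ℤ k v c) →
        ∃ (v : V) (c : ℤ → (List V → A) → (List V → A)),
          X.IsConeFun A k v c ∧ (X.coneRad c k : ℕ∞) ≤ X.complexRad ℤ k) := by
  classical
  constructor
  · refine le_sInf ?_
    rintro R ⟨v, c, hc, rfl⟩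
    have h1 : X.complexRad A k ≤ (X.coneRad (ConeAux.cAc c) k : ℕ∞) :=
      sInf_le ⟨v, ConeAux.cAc c, ConeAux.cAc_isConeFun hc, rfl⟩
    refine h1.trans ?_
    exact_mod_cast ConeAux.cAc_coneRad_le hfin hc hk₁
  · rintro ⟨v, c, hc⟩
    set S : Set ℕ∞ := {R | ∃ (v : V) (c : ℤ → (List V → ℤ) → (List V → ℤ)),
      X.IsConeFun ℤ k v c ∧ (X.coneRad c k : ℕ∞) = R} with hS
    set T : Set ℕ := {n | (n : ℕ∞) ∈ S} with hT
    have hTne : T.Nonempty := ⟨X.coneRad c k, ⟨v, c, hc, rfl⟩⟩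
    have hmem : ((sInf T : ℕ) : ℕ∞) ∈ S := Nat.sInf_mem hTne
    have heq : X.complexRad ℤ k = ((sInf T : ℕ) : ℕ∞) := by
      refine le_antisymm (sInf_le hmem) (le_sInf ?_)
      rintro R ⟨v', c', hc', rfl⟩
      exact_mod_cast Nat.sInf_le (⟨v', c', hc', rfl⟩ : (X.coneRad c' k : ℕ∞) ∈ S)
    obtain ⟨v₀, c₀, hc₀, hR⟩ := hmem
    refine ⟨v₀, ConeAux.cAc c₀, ConeAux.cAc_isConeFun hc₀, ?_⟩
    rw [heq, ← hR]
    exact_mod_cast ConeAux.cAc_coneRad_le hfin hc₀ hk₁
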